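/- Suppose K is (n−1)-dimensional. Let e ∈ ℤ[K] be the image of a homogeneous polynomial of degree n in ℤ[v₁,…,v_m], and suppose e² = Σ_{μ∈M_K} v_μ² in ℤ[K]. Then there exists a function ω : M_K → {±1} such that e = Σ_{μ∈M_K} ω(μ) v_μ. -/

import Mathlib

/-!
For a face `μ`, substituting `0` for the variables outside `μ` is a ring endomorphism of
`ℤ[v₁, …, v_m]` that kills `I_K`, hence is defined on `ℤ[K]`. For a maximal face `μ` it sends
`Σ_ν v_ν²` to `v_μ²`, so the restriction of `P` squares to `v_μ²` in the domain `ℤ[v]` and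
equals `±v_μ`. A polynomial killed by all these restrictions has no monomial supported on a
face, so it lies in `I_K`; apply this to `P - Σ_μ ω(μ) v_μ`.
-/

open MvPolynomial Finset

/-- The Stanley–Reisner ideal `I_K`. -/
noncomputable def SRIdeal (m : ℕ) (K : Finset (Finset (Fin m))) :
    Ideal (MvPolynomial (Fin m) ℤ) :=
  Ideal.span {p | ∃ β : Finset (Fin m), β ∉ K ∧ p = ∏ i ∈ β, X i}

/-- The set `M_K` of maximal faces of `K`, as a `Finset`. -/
noncomputable def maxFaces (m : ℕ) (K : Finset (Finset (Fin m))) : Finset (Finset (Fin m)) :=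
  K.filter (fun μ => ∀ β ∈ K, μ ⊆ β → β = μ)

namespace MvPolynomial

variable {σ R : Type*} [CommSemiring R]

theorem prod_X_support_dvd_monomial (d : σ →₀ ℕ) (r : R) :
    (∏ i ∈ d.support, X i : MvPolynomial σ R) ∣ monomial d r := by
  rw [← mul_one r, ← C_mul_monomial, ← prod_X_pow_eq_monomial]
  exact Dvd.dvd.mul_left (Finset.prod_dvd_prod_of_dvd _ _ fun i hi =>
    dvd_pow_self _ (Finsupp.mem_support_iff.1 hi)) _

variable [DecidableEq σ]

noncomputable def restrictVars (μ : Finset σ) : MvPolynomial σ R →ₐ[R] MvPolynomial σ R :=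
  aeval fun i => if i ∈ μ then X i else 0

theorem restrictVars_monomial (μ : Finset σ) (d : σ →₀ ℕ) (r : R) :
    restrictVars μ (monomial d r) = if d.support ⊆ μ then monomial d r else 0 := by
  rw [restrictVars, aeval_monomial, Finsupp.prod, algebraMap_eq]
  split_ifs with h
  · rw [← mul_one r, ← C_mul_monomial, ← prod_X_pow_eq_monomial, mul_one]
    exact congrArg _ (Finset.prod_congr rfl fun i hi => by rw [if_pos (h hi)])
  · obtain ⟨i, hid, hiμ⟩ := Finset.not_subset.1 h
    rw [Finset.prod_eq_zero hid (by rw [if_neg hiμ, zero_pow (Finsupp.mem_support_iff.1 hid)]),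
      mul_zero]

theorem coeff_restrictVars (μ : Finset σ) (d : σ →₀ ℕ) (p : MvPolynomial σ R) :
    coeff d (restrictVars μ p) = if d.support ⊆ μ then coeff d p else 0 := by
  induction p using induction_on' with
  | monomial e r =>
    rw [restrictVars_monomial]
    by_cases hed : e = d
    · subst hed
      split_ifs <;> simp
    · split_ifs <;> simp [coeff_monomial, hed]
  | add p q hp hq => rw [map_add, coeff_add, coeff_add, hp, hq]; split_ifs <;> simp

theorem restrictVars_prod_X (μ β : Finset σ) :
    restrictVars μ (∏ i ∈ β, X i : MvPolynomial σ R) = if β ⊆ μ then ∏ i ∈ β, X i else 0 := by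
  rw [map_prod]
  split_ifs with h
  · exact Finset.prod_congr rfl fun i hi => by rw [restrictVars, aeval_X, if_pos (h hi)]
  · obtain ⟨i, hiβ, hiμ⟩ := Finset.not_subset.1 h
    exact Finset.prod_eq_zero hiβ (by rw [restrictVars, aeval_X, if_neg hiμ])

end MvPolynomial

section StanleyReisner

variable {m : ℕ} {K : Finset (Finset (Fin m))}

theorem exists_mem_maxFaces_superset {α : Finset (Fin m)} (hα : α ∈ K) :
    ∃ μ ∈ maxFaces m K, α ⊆ μ := by
  obtain ⟨μ, hαμ, hμK, hμmax⟩ := K.exists_le_maximal hα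
  exact ⟨μ, Finset.mem_filter.2 ⟨hμK, fun β hβ hμβ => le_antisymm (hμmax hβ hμβ) hμβ⟩, hαμ⟩

theorem restrictVars_prod_X_of_mem_maxFaces {μ ν : Finset (Fin m)} (hμ : μ ∈ K)
    (hν : ν ∈ maxFaces m K) :
    restrictVars μ (∏ i ∈ ν, X i : MvPolynomial (Fin m) ℤ) = if ν = μ then ∏ i ∈ μ, X i else 0 := by
  rw [restrictVars_prod_X]
  have hνmax := (Finset.mem_filter.1 hν).2
  by_cases h : ν ⊆ μ
  · obtain rfl := hνmax μ hμ h
    rw [if_pos h, if_pos rfl]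
  · rw [if_neg h, if_neg fun h' => h h'.le]

theorem sum_maxFaces_restrictVars_prod_X {μ : Finset (Fin m)} (hμ : μ ∈ maxFaces m K)
    (f : Finset (Fin m) → MvPolynomial (Fin m) ℤ → MvPolynomial (Fin m) ℤ) (hf : ∀ ν, f ν 0 = 0) :
    ∑ ν ∈ maxFaces m K, f ν (restrictVars μ (∏ i ∈ ν, X i)) = f μ (∏ i ∈ μ, X i) := by
  have hμK := (Finset.mem_filter.1 hμ).1
  rw [Finset.sum_eq_single_of_mem μ hμ fun ν hν hνμ => by
    rw [restrictVars_prod_X_of_mem_maxFaces hμK hν, if_neg hνμ, hf]]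
  rw [restrictVars_prod_X_of_mem_maxFaces hμK hμ, if_pos rfl]

theorem SRIdeal_le_ker_restrictVars (hdown : ∀ α ∈ K, ∀ β ⊆ α, β ∈ K) {μ : Finset (Fin m)}
    (hμ : μ ∈ K) : SRIdeal m K ≤ RingHom.ker (restrictVars μ : MvPolynomial (Fin m) ℤ →ₐ[ℤ] _) := by
  rw [SRIdeal, Ideal.span_le]
  rintro _ ⟨β, hβ, rfl⟩
  rw [SetLike.mem_coe, RingHom.mem_ker, restrictVars_prod_X, if_neg fun h => hβ (hdown μ hμ β h)]

theorem restrictVars_eq_of_mk_eq (hdown : ∀ α ∈ K, ∀ β ⊆ α, β ∈ K) {μ : Finset (Fin m)}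
    (hμ : μ ∈ K) {P Q : MvPolynomial (Fin m) ℤ}
    (h : Ideal.Quotient.mk (SRIdeal m K) P = Ideal.Quotient.mk (SRIdeal m K) Q) :
    restrictVars μ P = restrictVars μ Q := by
  rw [← sub_eq_zero, ← map_sub]
  exact SRIdeal_le_ker_restrictVars hdown hμ (Ideal.Quotient.eq.1 h)

theorem mem_SRIdeal_of_forall_restrictVars_eq_zero {Q : MvPolynomial (Fin m) ℤ}
    (hQ : ∀ μ ∈ maxFaces m K, restrictVars μ Q = 0) : Q ∈ SRIdeal m K := by
  rw [Q.as_sum]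
  refine Ideal.sum_mem _ fun d hd => ?_
  have hdK : d.support ∉ K := by
    intro hdK
    obtain ⟨μ, hμ, hdμ⟩ := exists_mem_maxFaces_superset hdK
    have := congrArg (coeff d) (hQ μ hμ)
    rw [coeff_restrictVars, if_pos hdμ, coeff_zero] at this
    exact mem_support_iff.1 hd this
  exact Ideal.mem_of_dvd _ (prod_X_support_dvd_monomial d _) (Ideal.subset_span ⟨_, hdK, rfl⟩)

end StanleyReisner

theorem stmt5_general (m : ℕ) (K : Finset (Finset (Fin m)))
    (hdown : ∀ α ∈ K, ∀ β ⊆ α, β ∈ K)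
    (P : MvPolynomial (Fin m) ℤ)
    (hsq : (Ideal.Quotient.mk (SRIdeal m K) P) ^ 2 =
      ∑ μ ∈ maxFaces m K, Ideal.Quotient.mk (SRIdeal m K) (∏ i ∈ μ, X i) ^ 2) :
    ∃ ω : Finset (Fin m) → ℤ, (∀ μ ∈ maxFaces m K, ω μ = 1 ∨ ω μ = -1) ∧
      Ideal.Quotient.mk (SRIdeal m K) P =
        ∑ μ ∈ maxFaces m K, ω μ • Ideal.Quotient.mk (SRIdeal m K) (∏ i ∈ μ, X i) := by
  have hsq_lift : Ideal.Quotient.mk (SRIdeal m K) (P ^ 2) =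
      Ideal.Quotient.mk (SRIdeal m K) (∑ ν ∈ maxFaces m K, (∏ i ∈ ν, X i) ^ 2) := by
    simpa only [map_pow, map_sum] using hsq
  have hsign : ∀ μ ∈ maxFaces m K, ∃ ε : ℤ, (ε = 1 ∨ ε = -1) ∧
      restrictVars μ P = ε • ∏ i ∈ μ, X i := by
    intro μ hμ
    have hsq' : restrictVars μ P ^ 2 = (∏ i ∈ μ, X i) ^ 2 := by
      have := restrictVars_eq_of_mk_eq hdown (Finset.mem_filter.1 hμ).1 hsq_lift
      simp only [map_pow, map_sum] at this
      exact this.trans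
        (sum_maxFaces_restrictVars_prod_X hμ (fun _ x => x ^ 2) fun _ => zero_pow two_ne_zero)
    rcases sq_eq_sq_iff_eq_or_eq_neg.1 hsq' with h | h
    · exact ⟨1, Or.inl rfl, by rw [h, one_smul]⟩
    · exact ⟨-1, Or.inr rfl, by rw [h, neg_smul, one_smul]⟩
  choose! ω hω₁ hω using hsign
  refine ⟨ω, hω₁, ?_⟩
  simp only [← map_zsmul, ← map_sum]
  rw [Ideal.Quotient.eq]
  refine mem_SRIdeal_of_forall_restrictVars_eq_zero fun μ hμ => ?_
  simp only [map_sub, map_sum, map_zsmul]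
  rw [hω μ hμ, sum_maxFaces_restrictVars_prod_X hμ (fun ν x => ω ν • x) fun _ => smul_zero _, sub_self]

/-- Suppose `K` is `(n-1)`-dimensional.  If `e ∈ ℤ[K]` is the image of a homogeneous
polynomial of degree `n` and `e² = Σ_{μ ∈ M_K} v_μ²`, then `e = Σ_{μ ∈ M_K} ω(μ) v_μ`
for some function `ω : M_K → {±1}`. -/
theorem stmt5 (m n : ℕ) (K : Finset (Finset (Fin m)))
    (hempty : ∅ ∈ K) (hdown : ∀ α ∈ K, ∀ β ⊆ α, β ∈ K)
    (hdim : ∀ α ∈ K, α.card ≤ n) (hdim' : ∃ α ∈ K, α.card = n)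
    (P : MvPolynomial (Fin m) ℤ) (hP : P.IsHomogeneous n)
    (hsq : (Ideal.Quotient.mk (SRIdeal m K) P) ^ 2 =
      ∑ μ ∈ maxFaces m K, Ideal.Quotient.mk (SRIdeal m K) (∏ i ∈ μ, X i) ^ 2) :
    ∃ ω : Finset (Fin m) → ℤ, (∀ μ ∈ maxFaces m K, ω μ = 1 ∨ ω μ = -1) ∧
      Ideal.Quotient.mk (SRIdeal m K) P =
        ∑ μ ∈ maxFaces m K, ω μ • Ideal.Quotient.mk (SRIdeal m K) (∏ i ∈ μ, X i) :=
  stmt5_general m K hdown P hsq
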